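/- arXiv:2402.18468 — 2 statements merged into one kernel-verified Lean document; each statement's English description precedes it below -/
import Mathlib

section
/- For every integer n ≥ 1 and every x ∈ (-1,1), the principal value (1/π) P.V. ∫_{-1}^{1} √(1-ξ^2) U_{n-1}(ξ) / (x-ξ) dξ exists and equals T_n(x). -/
/-!
Write `Sₘ(ε)` for the truncated integral of `√(1-ξ²) Uₘ(ξ) / (x-ξ)`. The function
`√(1-x²) (log(1 - xξ + √(1-x²) √(1-ξ²)) - log|x-ξ|) + x arcsin ξ - √(1-ξ²)` is a primitive of
`√(1-ξ²) / (x-ξ)` on both sides of `x`; its logarithmic singularities at `x ∓ ε` cancel, so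
`S₀(ε) → π x = π T₁(x)`. Substituting `ξ = x - (x - ξ)` into `Uₘ₊₂ = 2ξ Uₘ₊₁ - Uₘ` gives
`Sₘ₊₂ = 2x Sₘ₊₁ - Sₘ - 2 Jₘ₊₁`, where the truncated integral `Jₘ₊₁(ε)` of `√(1-ξ²) Uₘ₊₁(ξ)`
tends to `∫₋₁¹ √(1-ξ²) Uₘ₊₁`. That integral is `π/2` for `m = -1` and `0` for `m ≥ 0`, because
`2 (1-ξ²) Uₘ = Tₘ - Tₘ₊₂` and every `Tₖ` with `k ≠ 0` is orthogonal to `1` for the weight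
`(1-ξ²)^(-1/2)`. So the limits `π Tₘ₊₁(x)` obey the recurrence of the `Tₖ`.
-/

open Polynomial Polynomial.Chebyshev Filter Topology Set MeasureTheory intervalIntegral

noncomputable def excisedIntegral (f : ℝ → ℝ) (a b x ε : ℝ) : ℝ :=
  (∫ ξ in a..x - ε, f ξ) + ∫ ξ in x + ε..b, f ξ

theorem tendsto_excisedIntegral {g : ℝ → ℝ} (hg : ∀ a b, IntervalIntegrable g volume a b)
    (a b x : ℝ) :
    Tendsto (excisedIntegral g a b x) (𝓝[>] 0) (𝓝 (∫ ξ in a..b, g ξ)) := by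
  have hsplit : excisedIntegral g a b x = fun ε =>
      (∫ ξ in a..x - ε, g ξ) + ((∫ ξ in a..b, g ξ) - ∫ ξ in a..x + ε, g ξ) := by
    ext ε
    rw [excisedIntegral, ← integral_add_adjacent_intervals (hg a (x + ε)) (hg (x + ε) b)]
    ring
  have hF := continuous_primitive hg a
  have hcont : Continuous fun ε : ℝ =>
      (∫ ξ in a..x - ε, g ξ) + ((∫ ξ in a..b, g ξ) - ∫ ξ in a..x + ε, g ξ) := by
    fun_prop
  rw [hsplit]
  simpa using (hcont.tendsto 0).mono_left nhdsWithin_le_nhds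

theorem intervalIntegrable_div_sub {f : ℝ → ℝ} (hf : Continuous f) {x c d : ℝ}
    (hx : x ∉ uIcc c d) : IntervalIntegrable (fun ξ => f ξ / (x - ξ)) volume c d :=
  (hf.continuousOn.div (by fun_prop) fun ξ hξ =>
    sub_ne_zero.2 (ne_of_mem_of_not_mem hξ hx).symm).intervalIntegrable

theorem integral_mul_U_add_two_div {w : ℝ → ℝ} (hw : Continuous w) (m : ℤ) {x c d : ℝ}
    (hx : x ∉ uIcc c d) :
    ∫ ξ in c..d, w ξ * (U ℝ (m + 2)).eval ξ / (x - ξ) =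
      2 * x * (∫ ξ in c..d, w ξ * (U ℝ (m + 1)).eval ξ / (x - ξ))
        - (∫ ξ in c..d, w ξ * (U ℝ m).eval ξ / (x - ξ))
        - 2 * ∫ ξ in c..d, w ξ * (U ℝ (m + 1)).eval ξ := by
  have hint : ∀ p : ℝ[X], IntervalIntegrable (fun ξ => w ξ * p.eval ξ / (x - ξ)) volume c d :=
    fun p => intervalIntegrable_div_sub (hw.mul p.continuous) hx
  have hint' : IntervalIntegrable (fun ξ => w ξ * (U ℝ (m + 1)).eval ξ) volume c d :=
    (hw.mul (U ℝ (m + 1)).continuous).intervalIntegrable c d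
  rw [← intervalIntegral.integral_const_mul, ← intervalIntegral.integral_const_mul,
    ← intervalIntegral.integral_sub ((hint _).const_mul _) (hint _),
    ← intervalIntegral.integral_sub (((hint _).const_mul _).sub (hint _)) (hint'.const_mul _)]
  refine integral_congr fun ξ hξ => ?_
  have hxξ : x - ξ ≠ 0 := sub_ne_zero.2 (ne_of_mem_of_not_mem hξ hx).symm
  simp only [U_add_two, eval_sub, eval_mul, eval_ofNat, eval_X]
  field_simp
  ring

theorem excisedIntegral_mul_U_add_two {w : ℝ → ℝ} (hw : Continuous w) (m : ℤ) {a b x ε : ℝ}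
    (hx : x ∈ Ioo a b) (hε : 0 < ε) :
    excisedIntegral (fun ξ => w ξ * (U ℝ (m + 2)).eval ξ / (x - ξ)) a b x ε =
      2 * x * excisedIntegral (fun ξ => w ξ * (U ℝ (m + 1)).eval ξ / (x - ξ)) a b x ε
        - excisedIntegral (fun ξ => w ξ * (U ℝ m).eval ξ / (x - ξ)) a b x ε
        - 2 * excisedIntegral (fun ξ => w ξ * (U ℝ (m + 1)).eval ξ) a b x ε := by
  have hl : x ∉ uIcc a (x - ε) := by
    rw [mem_uIcc]; rintro (⟨-, h⟩ | ⟨-, h⟩) <;> linarith [hx.1]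
  have hr : x ∉ uIcc (x + ε) b := by
    rw [mem_uIcc]; rintro (⟨h, -⟩ | ⟨h, -⟩) <;> linarith [hx.2]
  simp only [excisedIntegral, integral_mul_U_add_two_div hw m hl,
    integral_mul_U_add_two_div hw m hr]
  ring

theorem tendsto_excisedIntegral_mul_U_add_two {w : ℝ → ℝ} (hw : Continuous w) (m : ℤ)
    {a b x A B : ℝ} (hx : x ∈ Ioo a b)
    (hA : Tendsto (excisedIntegral (fun ξ => w ξ * (U ℝ m).eval ξ / (x - ξ)) a b x)
      (𝓝[>] 0) (𝓝 A))
    (hB : Tendsto (excisedIntegral (fun ξ => w ξ * (U ℝ (m + 1)).eval ξ / (x - ξ)) a b x)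
      (𝓝[>] 0) (𝓝 B)) :
    Tendsto (excisedIntegral (fun ξ => w ξ * (U ℝ (m + 2)).eval ξ / (x - ξ)) a b x) (𝓝[>] 0)
      (𝓝 (2 * x * B - A - 2 * ∫ ξ in a..b, w ξ * (U ℝ (m + 1)).eval ξ)) := by
  have hJ := tendsto_excisedIntegral
    (fun c d => (hw.mul (U ℝ (m + 1)).continuous).intervalIntegrable c d) a b x
  refine (((hB.const_mul (2 * x)).sub hA).sub (hJ.const_mul 2)).congr' ?_
  filter_upwards [self_mem_nhdsWithin] with ε hε
  exact (excisedIntegral_mul_U_add_two hw m hx hε).symm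

theorem two_mul_one_sub_X_sq_mul_U (R : Type*) [CommRing R] (m : ℤ) :
    2 * ((1 - X ^ 2) * U R m) = T R m - T R (m + 2) := by
  linear_combination 2 * one_sub_X_sq_mul_U_eq_pol_in_T R m - T_add_two R m

theorem integral_sqrt_one_sub_sq_mul_U_eq_zero {m : ℤ} (h₀ : m ≠ 0) (h₂ : m + 2 ≠ 0) :
    ∫ t in (-1)..1, √(1 - t ^ 2) * (U ℝ m).eval t = 0 := by
  calc ∫ t in (-1)..1, √(1 - t ^ 2) * (U ℝ m).eval t
      = ∫ t in (-1)..1, ((T ℝ m).eval t - (T ℝ (m + 2)).eval t) / 2 * √(1 - t ^ 2)⁻¹ := by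
        refine integral_congr fun t _ => ?_
        have h := congrArg (eval t) (two_mul_one_sub_X_sq_mul_U ℝ m)
        simp only [eval_mul, eval_sub, eval_pow, eval_one, eval_X, eval_ofNat] at h
        rw [← h, Real.sqrt_inv]
        have hsqrt : (1 - t ^ 2) * (√(1 - t ^ 2))⁻¹ = √(1 - t ^ 2) := Real.div_sqrt
        linear_combination (-(U ℝ m).eval t) * hsqrt
    _ = 0 := by
      rw [← integral_measureT, MeasureTheory.integral_div,
        integral_sub (integrable_measureT (by fun_prop)) (integrable_measureT (by fun_prop)),
        integral_eval_T_real_measureT_of_ne_zero h₀, integral_eval_T_real_measureT_of_ne_zero h₂]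
      simp

theorem one_sub_mul_add_sqrt_mul_sqrt_pos {x ξ : ℝ} (hx : x ∈ Ioo (-1) 1)
    (hξ : ξ ∈ Icc (-1) 1) : 0 < 1 - x * ξ + √(1 - x ^ 2) * √(1 - ξ ^ 2) := by
  have hxξ : x * ξ < 1 :=
    calc x * ξ ≤ |x| * |ξ| := (le_abs_self _).trans (abs_mul x ξ).le
      _ < 1 := by nlinarith [abs_lt.2 hx, abs_le.2 hξ, abs_nonneg x]
  nlinarith [mul_nonneg (Real.sqrt_nonneg (1 - x ^ 2)) (Real.sqrt_nonneg (1 - ξ ^ 2))]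

theorem hasDerivAt_sqrt_one_sub_sq {t : ℝ} (ht : t ∈ Ioo (-1) 1) :
    HasDerivAt (fun u => √(1 - u ^ 2)) (-t / √(1 - t ^ 2)) t := by
  have h : (0 : ℝ) < 1 - t ^ 2 := by nlinarith [ht.1, ht.2]
  convert ((hasDerivAt_pow 2 t).const_sub 1).sqrt h.ne' using 1
  field_simp
  ring

noncomputable def sqrtCauchyRegular (x ξ : ℝ) : ℝ :=
  √(1 - x ^ 2) * Real.log (1 - x * ξ + √(1 - x ^ 2) * √(1 - ξ ^ 2)) + x * Real.arcsin ξ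
    - √(1 - ξ ^ 2)

/-- Since `Real.log` is `log |·|`, this is a primitive of `√(1 - ξ²) / (x - ξ)` on both sides
of `x`. -/
noncomputable def sqrtCauchyPrimitive (x ξ : ℝ) : ℝ :=
  sqrtCauchyRegular x ξ - √(1 - x ^ 2) * Real.log (x - ξ)

theorem continuousOn_sqrtCauchyRegular {x : ℝ} (hx : x ∈ Ioo (-1) 1) :
    ContinuousOn (sqrtCauchyRegular x) (Icc (-1) 1) := by
  unfold sqrtCauchyRegular
  refine ContinuousOn.sub (ContinuousOn.add (ContinuousOn.mul continuousOn_const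
    (ContinuousOn.log (by fun_prop) fun ξ hξ => (one_sub_mul_add_sqrt_mul_sqrt_pos hx hξ).ne'))
    (by fun_prop)) (by fun_prop)

theorem hasDerivAt_sqrtCauchyPrimitive {x ξ : ℝ} (hx : x ∈ Ioo (-1) 1) (hξ : ξ ∈ Ioo (-1) 1)
    (hξx : ξ ≠ x) : HasDerivAt (sqrtCauchyPrimitive x) (√(1 - ξ ^ 2) / (x - ξ)) ξ := by
  have hs : √(1 - x ^ 2) ^ 2 = 1 - x ^ 2 := Real.sq_sqrt (by nlinarith [hx.1, hx.2])
  have hu : √(1 - ξ ^ 2) ^ 2 = 1 - ξ ^ 2 := Real.sq_sqrt (by nlinarith [hξ.1, hξ.2])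
  have hu0 : √(1 - ξ ^ 2) ≠ 0 := (Real.sqrt_pos.2 (by nlinarith [hξ.1, hξ.2])).ne'
  have hA := (one_sub_mul_add_sqrt_mul_sqrt_pos hx (Ioo_subset_Icc_self hξ)).ne'
  have hxξ : x - ξ ≠ 0 := sub_ne_zero.2 hξx.symm
  have hsq := hasDerivAt_sqrt_one_sub_sq hξ
  have h := (((((hasDerivAt_id ξ).const_mul x).const_sub 1).add (hsq.const_mul _)).log hA
    |>.const_mul (√(1 - x ^ 2))).add ((Real.hasDerivAt_arcsin hξ.1.ne' hξ.2.ne).const_mul x)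
    |>.sub hsq |>.sub ((((hasDerivAt_id ξ).const_sub x).log hxξ).const_mul (√(1 - x ^ 2)))
  refine (show HasDerivAt (sqrtCauchyPrimitive x) _ ξ from h).congr_deriv ?_
  simp only [Pi.add_apply, id, mul_one]
  field_simp
  linear_combination (1 - x * ξ) * hs
    + (√(1 - x ^ 2) ^ 2 - (1 - x * ξ + √(1 - x ^ 2) * √(1 - ξ ^ 2))) * hu

theorem integral_sqrt_one_sub_sq_div_sub {x c d : ℝ} (hx : x ∈ Ioo (-1) 1) (hcd : c ≤ d)
    (hc : -1 ≤ c) (hd : d ≤ 1) (hxcd : x ∉ Icc c d) :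
    ∫ ξ in c..d, √(1 - ξ ^ 2) / (x - ξ) = sqrtCauchyPrimitive x d - sqrtCauchyPrimitive x c := by
  have hne : ∀ ξ ∈ Icc c d, ξ ≠ x := fun ξ hξ => ne_of_mem_of_not_mem hξ hxcd
  refine integral_eq_sub_of_hasDerivAt_of_le hcd ?_ (fun ξ hξ => ?_) ?_
  · exact ((continuousOn_sqrtCauchyRegular hx).mono (Icc_subset_Icc hc hd)).sub
      (continuousOn_const.mul (ContinuousOn.log (by fun_prop)
        fun ξ hξ => sub_ne_zero.2 (hne ξ hξ).symm))
  · exact hasDerivAt_sqrtCauchyPrimitive hx ⟨hc.trans_lt hξ.1, hξ.2.trans_le hd⟩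
      (hne ξ (Ioo_subset_Icc_self hξ))
  · exact intervalIntegrable_div_sub (by fun_prop) (by rwa [uIcc_of_le hcd])

theorem sqrtCauchyPrimitive_one_sub_neg_one (x : ℝ) :
    sqrtCauchyPrimitive x 1 - sqrtCauchyPrimitive x (-1) = Real.pi * x := by
  have hlog : Real.log (x - 1) = Real.log (1 - x) := by
    rw [← Real.log_neg_eq_log, neg_sub]
  simp only [sqrtCauchyPrimitive, sqrtCauchyRegular, hlog, Real.arcsin_one, Real.arcsin_neg_one,
    sub_neg_eq_add, add_comm x 1]
  norm_num
  ring

theorem tendsto_excisedIntegral_sqrt_one_sub_sq_div {x : ℝ} (hx : x ∈ Ioo (-1) 1) :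
    Tendsto (excisedIntegral (fun ξ => √(1 - ξ ^ 2) / (x - ξ)) (-1) 1 x) (𝓝[>] 0)
      (𝓝 (Real.pi * x)) := by
  have hG : ContinuousAt (sqrtCauchyRegular x) x :=
    (continuousOn_sqrtCauchyRegular hx).continuousAt (Icc_mem_nhds hx.1 hx.2)
  have hlim : Tendsto
      (fun ε => Real.pi * x + (sqrtCauchyRegular x (x - ε) - sqrtCauchyRegular x (x + ε)))
      (𝓝 0) (𝓝 (Real.pi * x)) := by
    have h : ContinuousAt
        (fun ε => sqrtCauchyRegular x (x - ε) - sqrtCauchyRegular x (x + ε)) 0 :=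
      (hG.comp_of_eq (by fun_prop) (sub_zero x)).sub (hG.comp_of_eq (by fun_prop) (add_zero x))
    simpa using h.tendsto.const_add (Real.pi * x)
  refine (tendsto_nhdsWithin_of_tendsto_nhds hlim).congr' ?_
  filter_upwards [Ioo_mem_nhdsGT (lt_min (neg_lt_iff_pos_add'.1 hx.1) (sub_pos.2 hx.2))]
    with ε ⟨hε, hεx⟩
  have hε₁ : ε < 1 + x := hεx.trans_le (min_le_left _ _)
  have hε₂ : ε < 1 - x := hεx.trans_le (min_le_right _ _)
  have hl := integral_sqrt_one_sub_sq_div_sub hx (c := -1) (d := x - ε) (by linarith) le_rfl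
    (by linarith [hx.2]) fun h => by linarith [h.2]
  have hr := integral_sqrt_one_sub_sq_div_sub hx (c := x + ε) (d := 1) (by linarith)
    (by linarith [hx.1]) le_rfl fun h => by linarith [h.1]
  have hlog : Real.log (x - (x + ε)) = Real.log (x - (x - ε)) := by
    rw [← Real.log_neg_eq_log]; ring_nf
  rw [excisedIntegral, hl, hr, ← sqrtCauchyPrimitive_one_sub_neg_one]
  simp only [sqrtCauchyPrimitive, hlog]
  ring

theorem tendsto_excisedIntegral_sqrt_one_sub_sq_mul_U {x : ℝ} (hx : x ∈ Ioo (-1) 1) (m : ℕ) :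
    Tendsto (excisedIntegral (fun ξ => √(1 - ξ ^ 2) * (U ℝ m).eval ξ / (x - ξ)) (-1) 1 x)
      (𝓝[>] 0) (𝓝 (Real.pi * (T ℝ (m + 1)).eval x)) := by
  have hw : Continuous fun ξ : ℝ => √(1 - ξ ^ 2) := by fun_prop
  induction m using Nat.twoStepInduction with
  | zero => simpa using tendsto_excisedIntegral_sqrt_one_sub_sq_div hx
  | one =>
    have hA : Tendsto (excisedIntegral (fun ξ => √(1 - ξ ^ 2) * (U ℝ (-1)).eval ξ / (x - ξ))
        (-1) 1 x) (𝓝[>] 0) (𝓝 0) :=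
      tendsto_const_nhds.congr fun ε => by simp [excisedIntegral]
    convert tendsto_excisedIntegral_mul_U_add_two hw (-1) hx hA
      (by simpa using tendsto_excisedIntegral_sqrt_one_sub_sq_div hx) using 2
    · norm_num
    · norm_num [T_two, integral_sqrt_one_sub_sq]
      ring
  | more m h₀ h₁ =>
    have h := tendsto_excisedIntegral_mul_U_add_two hw m hx h₀ (mod_cast h₁)
    rw [integral_sqrt_one_sub_sq_mul_U_eq_zero (by omega) (by omega)] at h
    convert h using 2 <;> push_cast
    · rfl
    · rw [show (m : ℤ) + 2 + 1 = m + 1 + 2 by ring, T_add_two]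
      simp only [eval_sub, eval_mul, eval_ofNat, eval_X]
      ring

/-- For `n ≥ 1` and `x ∈ (-1,1)`, the principal value
`(1/π) P.V. ∫_{-1}^{1} √(1-ξ²) Uₙ₋₁(ξ) / (x-ξ) dξ` exists and equals `Tₙ(x)`. -/
theorem pv_sqrt_chebyshevU (n : ℕ) (hn : 1 ≤ n) (x : ℝ) (hx : x ∈ Set.Ioo (-1:ℝ) 1) :
    Tendsto
      (fun ε : ℝ =>
        (1 / Real.pi) *
          ((∫ ξ in (-1:ℝ)..(x - ε),
              Real.sqrt (1 - ξ ^ 2) * (Polynomial.Chebyshev.U ℝ ((n : ℤ) - 1)).eval ξ / (x - ξ)) +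
           ∫ ξ in (x + ε)..(1:ℝ),
              Real.sqrt (1 - ξ ^ 2) * (Polynomial.Chebyshev.U ℝ ((n : ℤ) - 1)).eval ξ / (x - ξ)))
      (nhdsWithin 0 (Set.Ioi 0))
      (nhds ((Polynomial.Chebyshev.T ℝ n).eval x)) := by
  obtain ⟨m, rfl⟩ := Nat.exists_eq_add_of_le' hn
  have h := (tendsto_excisedIntegral_sqrt_one_sub_sq_mul_U hx m).const_mul (1 / Real.pi)
  rw [← mul_assoc, one_div_mul_cancel Real.pi_ne_zero, one_mul] at h
  push_cast
  simpa [excisedIntegral] using h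
end

section
/- For every integer n ≥ 1 and every y ∈ (0,π), the principal value −(sin y/π) P.V. ∫_{0}^{π} cos(nz) / (cos y − cos z) dz exists and equals sin(ny); moreover for n = 0, i.e. for the constant function 1, the principal value −(sin y/π) P.V. ∫_{0}^{π} 1/(cos y − cos z) dz exists and equals 0. -/
/-!
`log |sin((z - y)/2)| - log |sin((z + y)/2)|` is an antiderivative of `sin y / (cos y - cos z)`
on `[0, π] \ {y}`. It vanishes at `0` and `π`, and its logarithmic singularities at `y - ε` and
`y + ε` cancel, so the principal value `K*1(y)` is `0`.

Since `cos((c+1)z) + cos((c-1)z) = 2 cos y cos(cz) - 2 (cos y - cos z) cos(cz)`, the values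
`u n := K* cos(n·)(y)` satisfy
`u (n+1) + u (n-1) = 2 cos y u n + (2 sin y / π) ∫₀^π cos(nz) dz`.
The integral vanishes for `n ≥ 1`, so `u` obeys the recurrence of `sin(n y)`, and it has the
same initial values: `u 0 = 0`, and `u 1 = sin y` from the case `n = 0`, where the integral
is `π`.
-/

open Real Set Filter Topology MeasureTheory intervalIntegral

noncomputable def puncturedIntegral (a b y : ℝ) (f : ℝ → ℝ) (ε : ℝ) : ℝ :=
  (∫ z in a..(y - ε), f z) + ∫ z in (y + ε)..b, f z

section Punctured

variable {a b y ε : ℝ} {f g : ℝ → ℝ}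

lemma eventually_pos_and_le_sub_and_add_le (ha : a < y) (hb : y < b) :
    ∀ᶠ ε in 𝓝[>] (0 : ℝ), 0 < ε ∧ a ≤ y - ε ∧ y + ε ≤ b := by
  have hδ : (0 : ℝ) < min (y - a) (b - y) := lt_min (by linarith) (by linarith)
  filter_upwards [Ioo_mem_nhdsGT hδ] with ε ⟨hε, hεδ⟩
  exact ⟨hε, by linarith [min_le_left (y - a) (b - y)],
    by linarith [min_le_right (y - a) (b - y)]⟩

lemma uIcc_sub_subset_Icc_diff_singleton (hε : 0 < ε) (ha : a ≤ y - ε) (hb : y + ε ≤ b) :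
    uIcc a (y - ε) ⊆ Icc a b \ {y} := by
  rw [uIcc_of_le ha]
  exact fun z ⟨hz₁, hz₂⟩ =>
    ⟨⟨hz₁, by linarith⟩, fun h => by rw [mem_singleton_iff] at h; linarith⟩

lemma uIcc_add_subset_Icc_diff_singleton (hε : 0 < ε) (ha : a ≤ y - ε) (hb : y + ε ≤ b) :
    uIcc (y + ε) b ⊆ Icc a b \ {y} := by
  rw [uIcc_of_le (by linarith)]
  exact fun z ⟨hz₁, hz₂⟩ =>
    ⟨⟨by linarith, hz₂⟩, fun h => by rw [mem_singleton_iff] at h; linarith⟩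

lemma puncturedIntegral_congr (hfg : EqOn f g (Icc a b \ {y})) (hε : 0 < ε) (ha : a ≤ y - ε)
    (hb : y + ε ≤ b) : puncturedIntegral a b y f ε = puncturedIntegral a b y g ε := by
  unfold puncturedIntegral
  rw [integral_congr (hfg.mono (uIcc_sub_subset_Icc_diff_singleton hε ha hb)),
    integral_congr (hfg.mono (uIcc_add_subset_Icc_diff_singleton hε ha hb))]

lemma puncturedIntegral_add (hf : ContinuousOn f (Icc a b \ {y}))
    (hg : ContinuousOn g (Icc a b \ {y})) (hε : 0 < ε) (ha : a ≤ y - ε) (hb : y + ε ≤ b) :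
    puncturedIntegral a b y (fun z => f z + g z) ε =
      puncturedIntegral a b y f ε + puncturedIntegral a b y g ε := by
  have hl := uIcc_sub_subset_Icc_diff_singleton hε ha hb
  have hr := uIcc_add_subset_Icc_diff_singleton hε ha hb
  unfold puncturedIntegral
  rw [integral_add (hf.mono hl).intervalIntegrable (hg.mono hl).intervalIntegrable,
    integral_add (hf.mono hr).intervalIntegrable (hg.mono hr).intervalIntegrable]
  ring

lemma puncturedIntegral_sub (hf : ContinuousOn f (Icc a b \ {y}))
    (hg : ContinuousOn g (Icc a b \ {y})) (hε : 0 < ε) (ha : a ≤ y - ε) (hb : y + ε ≤ b) :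
    puncturedIntegral a b y (fun z => f z - g z) ε =
      puncturedIntegral a b y f ε - puncturedIntegral a b y g ε := by
  have hl := uIcc_sub_subset_Icc_diff_singleton hε ha hb
  have hr := uIcc_add_subset_Icc_diff_singleton hε ha hb
  unfold puncturedIntegral
  rw [integral_sub (hf.mono hl).intervalIntegrable (hg.mono hl).intervalIntegrable,
    integral_sub (hf.mono hr).intervalIntegrable (hg.mono hr).intervalIntegrable]
  ring

lemma puncturedIntegral_const_mul (c : ℝ) :
    puncturedIntegral a b y (fun z => c * f z) ε = c * puncturedIntegral a b y f ε := by
  simp only [puncturedIntegral, intervalIntegral.integral_const_mul, mul_add]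

lemma puncturedIntegral_eq_sub_of_hasDerivAt {G : ℝ → ℝ}
    (hG : ∀ z ∈ Icc a b \ {y}, HasDerivAt G (f z) z) (hf : ContinuousOn f (Icc a b \ {y}))
    (hε : 0 < ε) (ha : a ≤ y - ε) (hb : y + ε ≤ b) :
    puncturedIntegral a b y f ε = G (y - ε) - G a + (G b - G (y + ε)) := by
  have hl := uIcc_sub_subset_Icc_diff_singleton hε ha hb
  have hr := uIcc_add_subset_Icc_diff_singleton hε ha hb
  rw [puncturedIntegral,
    integral_eq_sub_of_hasDerivAt (fun z hz => hG z (hl hz)) (hf.mono hl).intervalIntegrable,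
    integral_eq_sub_of_hasDerivAt (fun z hz => hG z (hr hz)) (hf.mono hr).intervalIntegrable]

lemma tendsto_puncturedIntegral (hf : ∀ u v, IntervalIntegrable f volume u v) :
    Tendsto (puncturedIntegral a b y f) (𝓝[>] 0) (𝓝 (∫ z in a..b, f z)) := by
  have hcont : Continuous (puncturedIntegral a b y f) := by
    have hr : Continuous fun ε => ∫ z in (y + ε)..b, f z := by
      simp only [integral_symm b]
      exact ((continuous_primitive hf b).comp (by fun_prop)).neg
    exact ((continuous_primitive hf a).comp (by fun_prop)).add hr
  have h0 : puncturedIntegral a b y f 0 = ∫ z in a..b, f z := by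
    simp only [puncturedIntegral, sub_zero, add_zero]
    exact integral_add_adjacent_intervals (hf a y) (hf y b)
  exact h0 ▸ hcont.continuousWithinAt.tendsto

end Punctured

section Airfoil

variable {y ε : ℝ}

/-- The `ε`-truncation of the principal value `K*ψ(y)`. -/
noncomputable def kstarTrunc (y : ℝ) (ψ : ℝ → ℝ) (ε : ℝ) : ℝ :=
  -(sin y / π) * puncturedIntegral 0 π y (fun z => ψ z / (cos y - cos z)) ε

lemma cos_sub_cos_ne_zero (hy : y ∈ Icc 0 π) {z : ℝ} (hz : z ∈ Icc 0 π \ {y}) :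
    cos y - cos z ≠ 0 :=
  fun h => hz.2 (injOn_cos hz.1 hy (by linarith))

lemma continuousOn_div_cos_sub_cos {f : ℝ → ℝ} (hf : Continuous f) (hy : y ∈ Icc 0 π) :
    ContinuousOn (fun z => f z / (cos y - cos z)) (Icc 0 π \ {y}) :=
  hf.continuousOn.div (by fun_prop) fun _ hz => cos_sub_cos_ne_zero hy hz

lemma cos_sub_cos_eq_mul_sin (y z : ℝ) :
    cos y - cos z = 2 * sin ((z + y) / 2) * sin ((z - y) / 2) := by
  rw [cos_sub_cos, show (y - z) / 2 = -((z - y) / 2) by ring, add_comm y z, sin_neg]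
  ring

/- `Real.log` is `log |·|` on negative arguments, so this antiderivative also serves for `w < y`,
where `sin ((w - y) / 2) < 0`. -/
lemma hasDerivAt_log_sin_sub_log_sin {z : ℝ} (hm : sin ((z - y) / 2) ≠ 0)
    (hp : sin ((z + y) / 2) ≠ 0) :
    HasDerivAt (fun w => log (sin ((w - y) / 2)) - log (sin ((w + y) / 2)))
      (sin y / (cos y - cos z)) z := by
  have hm' := ((((hasDerivAt_id z).sub_const y).div_const 2).sin).log hm
  have hp' := ((((hasDerivAt_id z).add_const y).div_const 2).sin).log hp
  refine (hm'.sub hp').congr_deriv ?_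
  simp only [id]
  have hsin : sin y =
      sin ((z + y) / 2) * cos ((z - y) / 2) - cos ((z + y) / 2) * sin ((z - y) / 2) := by
    rw [← sin_sub]; ring_nf
  rw [cos_sub_cos_eq_mul_sin, hsin]
  field_simp

lemma sin_half_sub_ne_zero (hy : y ∈ Ioo 0 π) {z : ℝ} (hz : z ∈ Icc 0 π \ {y}) :
    sin ((z - y) / 2) ≠ 0 := by
  obtain ⟨⟨hz₀, hzπ⟩, hzy⟩ := hz
  rw [Ne, sin_eq_zero_iff_of_lt_of_lt (by linarith [hy.2]) (by linarith [hy.1])]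
  exact fun h => hzy (mem_singleton_iff.mpr (by linarith))

lemma sin_half_add_ne_zero (hy : y ∈ Ioo 0 π) {z : ℝ} (hz : z ∈ Icc 0 π) :
    sin ((z + y) / 2) ≠ 0 :=
  (sin_pos_of_pos_of_lt_pi (by linarith [hy.1, hz.1]) (by linarith [hy.2, hz.2])).ne'

lemma puncturedIntegral_sin_div_cos_sub_cos (hy : y ∈ Ioo 0 π) (hε : 0 < ε) (ha : 0 ≤ y - ε)
    (hb : y + ε ≤ π) :
    puncturedIntegral 0 π y (fun z => sin y / (cos y - cos z)) ε =
      log (sin (y + ε / 2)) - log (sin (y - ε / 2)) := by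
  rw [puncturedIntegral_eq_sub_of_hasDerivAt
    (fun z hz => hasDerivAt_log_sin_sub_log_sin (sin_half_sub_ne_zero hy hz)
      (sin_half_add_ne_zero hy hz.1))
    (continuousOn_div_cos_sub_cos continuous_const (Ioo_subset_Icc_self hy)) hε ha hb]
  have h₀ : (0 - y) / 2 = -((0 + y) / 2) := by ring
  have hπ : (π + y) / 2 = π - (π - y) / 2 := by ring
  have hl₁ : (y - ε - y) / 2 = -(ε / 2) := by ring
  have hl₂ : (y - ε + y) / 2 = y - ε / 2 := by ring
  have hr₁ : (y + ε - y) / 2 = ε / 2 := by ring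
  have hr₂ : (y + ε + y) / 2 = y + ε / 2 := by ring
  simp only [h₀, hπ, hl₁, hl₂, hr₁, hr₂, sin_neg, sin_pi_sub, log_neg_eq_log]
  ring

lemma tendsto_kstarTrunc_one (hy : y ∈ Ioo 0 π) :
    Tendsto (kstarTrunc y fun _ => 1) (𝓝[>] 0) (𝓝 0) := by
  have hsin : sin y ≠ 0 := (sin_pos_of_pos_of_lt_pi hy.1 hy.2).ne'
  have hcont : ContinuousAt
      (fun ε => -(1 / π) * (log (sin (y + ε / 2)) - log (sin (y - ε / 2)))) 0 := by
    fun_prop (disch := simp [hsin])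
  have hlim : Tendsto (fun ε => -(1 / π) * (log (sin (y + ε / 2)) - log (sin (y - ε / 2))))
      (𝓝[>] 0) (𝓝 0) := by
    simpa using hcont.continuousWithinAt.tendsto
  refine hlim.congr' ?_
  filter_upwards [eventually_pos_and_le_sub_and_add_le hy.1 hy.2] with ε ⟨hε, ha, hb⟩
  rw [← puncturedIntegral_sin_div_cos_sub_cos hy hε ha hb, kstarTrunc]
  simp only [← mul_one_div (sin y), puncturedIntegral_const_mul]
  field_simp

lemma kstarTrunc_cos_add_one_add_kstarTrunc_cos_sub_one (hy : y ∈ Icc 0 π) (hε : 0 < ε)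
    (ha : 0 ≤ y - ε) (hb : y + ε ≤ π) (c : ℝ) :
    kstarTrunc y (fun z => cos ((c + 1) * z)) ε +
        kstarTrunc y (fun z => cos ((c - 1) * z)) ε =
      2 * cos y * kstarTrunc y (fun z => cos (c * z)) ε +
        2 * sin y / π * puncturedIntegral 0 π y (fun z => cos (c * z)) ε := by
  have hcont (d : ℝ) :=
    continuousOn_div_cos_sub_cos (f := fun z => cos (d * z)) (by fun_prop) hy
  have hpt : EqOn
      (fun z => cos ((c + 1) * z) / (cos y - cos z) + cos ((c - 1) * z) / (cos y - cos z))
      (fun z => 2 * cos y * (cos (c * z) / (cos y - cos z)) - 2 * cos (c * z))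
      (Icc 0 π \ {y}) := by
    intro z hz
    have hD := cos_sub_cos_ne_zero hy hz
    simp only [add_mul, sub_mul, one_mul, cos_add, cos_sub]
    field_simp
    ring
  simp only [kstarTrunc]
  rw [← mul_add, ← puncturedIntegral_add (hcont _) (hcont _) hε ha hb,
    puncturedIntegral_congr hpt hε ha hb,
    puncturedIntegral_sub (f := fun z => 2 * cos y * (cos (c * z) / (cos y - cos z)))
      (continuousOn_const.mul (hcont c)) (by fun_prop) hε ha hb,
    puncturedIntegral_const_mul, puncturedIntegral_const_mul]
  field_simp
  ring

lemma tendsto_kstarTrunc_cos_add_one (hy : y ∈ Ioo 0 π) (c : ℝ) {L₀ L₁ : ℝ}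
    (h₀ : Tendsto (kstarTrunc y fun z => cos (c * z)) (𝓝[>] 0) (𝓝 L₀))
    (h₁ : Tendsto (kstarTrunc y fun z => cos ((c - 1) * z)) (𝓝[>] 0) (𝓝 L₁)) :
    Tendsto (kstarTrunc y fun z => cos ((c + 1) * z)) (𝓝[>] 0)
      (𝓝 (2 * cos y * L₀ + 2 * sin y / π *
         (∫ z in (0 : ℝ)..π, cos (c * z)) - L₁)) := by
  have hP := tendsto_puncturedIntegral (a := 0) (b := π) (y := y)
    fun u v => (by fun_prop : Continuous fun z => cos (c * z)).intervalIntegrable u v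
  refine (((h₀.const_mul _).add (hP.const_mul _)).sub h₁).congr' ?_
  filter_upwards [eventually_pos_and_le_sub_and_add_le hy.1 hy.2] with ε ⟨hε, ha, hb⟩
  rw [← kstarTrunc_cos_add_one_add_kstarTrunc_cos_sub_one (Ioo_subset_Icc_self hy) hε ha hb]
  ring

lemma integral_cos_nat_mul {n : ℕ} (hn : n ≠ 0) : ∫ z in (0 : ℝ)..π, cos (n * z) = 0 := by
  rw [integral_comp_mul_left (fun x => cos x) (Nat.cast_ne_zero.mpr hn), integral_cos,
    sin_nat_mul_pi]
  simp

lemma tendsto_kstarTrunc_cos_one (hy : y ∈ Ioo 0 π) :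
    Tendsto (kstarTrunc y cos) (𝓝[>] 0) (𝓝 (sin y)) := by
  have hP := tendsto_puncturedIntegral (a := 0) (b := π) (y := y) (f := fun _ => 1)
    fun _ _ => intervalIntegrable_const
  have hlim := (((tendsto_kstarTrunc_one hy).const_mul (2 * cos y)).add
    (hP.const_mul (2 * sin y / π))).div_const 2
  rw [show (2 * cos y * 0 + 2 * sin y / π * ∫ _ in (0 : ℝ)..π, (1 : ℝ)) / 2 = sin y by simp]
    at hlim
  refine hlim.congr' ?_
  filter_upwards [eventually_pos_and_le_sub_and_add_le hy.1 hy.2] with ε ⟨hε, ha, hb⟩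
  have hrec :=
    kstarTrunc_cos_add_one_add_kstarTrunc_cos_sub_one (Ioo_subset_Icc_self hy) hε ha hb 0
  simp only [zero_add, zero_sub, neg_mul, one_mul, cos_neg, zero_mul, cos_zero] at hrec
  linarith

lemma tendsto_kstarTrunc_cos (hy : y ∈ Ioo 0 π) (n : ℕ) :
    Tendsto (kstarTrunc y fun z => cos (n * z)) (𝓝[>] 0) (𝓝 (sin (n * y))) := by
  suffices ∀ n : ℕ,
      Tendsto (kstarTrunc y fun z => cos (n * z)) (𝓝[>] 0) (𝓝 (sin (n * y))) ∧
      Tendsto (kstarTrunc y fun z => cos ((n + 1 : ℕ) * z)) (𝓝[>] 0)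
        (𝓝 (sin ((n + 1 : ℕ) * y))) from (this n).1
  intro n
  induction n with
  | zero =>
    exact ⟨by simpa using tendsto_kstarTrunc_one hy,
      by simpa using tendsto_kstarTrunc_cos_one hy⟩
  | succ n ih =>
    refine ⟨ih.2, ?_⟩
    have h := tendsto_kstarTrunc_cos_add_one hy _ ih.2 (by simpa using ih.1)
    rw [integral_cos_nat_mul (n := n + 1) (by omega)] at h
    have hcast : ((n + 1 + 1 : ℕ) : ℝ) = ((n + 1 : ℕ) : ℝ) + 1 := by push_cast; ring
    have hsin_add : sin (((n + 1 : ℕ) + 1 : ℝ) * y) =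
        2 * cos y * sin ((n + 1 : ℕ) * y) + 2 * sin y / π * 0 - sin (n * y) := by
      rw [show (n : ℝ) * y = (n + 1 : ℕ) * y - y by push_cast; ring, add_mul, one_mul, sin_add,
        sin_sub]
      ring
    rwa [hcast, hsin_add]

end Airfoil

/-- Adjoint airfoil-operator identities `K* cos(n·) = sin(n·)` (for `n ≥ 1`) and
`K* 1 = 0`: for `y ∈ (0,π)`, the principal values
`−(sin y/π) P.V. ∫₀^π cos(nz)/(cos y − cos z) dz` and
`−(sin y/π) P.V. ∫₀^π 1/(cos y − cos z) dz` exist and equal `sin(ny)` and `0`,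
respectively. -/
theorem airfoil_Kstar (y : ℝ) (hy : y ∈ Set.Ioo 0 Real.pi) :
    (∀ n : ℕ, 1 ≤ n →
      Tendsto
        (fun ε : ℝ =>
          -(Real.sin y / Real.pi) *
            ((∫ z in (0:ℝ)..(y - ε), Real.cos (n * z) / (Real.cos y - Real.cos z)) +
             ∫ z in (y + ε)..Real.pi, Real.cos (n * z) / (Real.cos y - Real.cos z)))
        (nhdsWithin 0 (Set.Ioi 0)) (nhds (Real.sin (n * y)))) ∧
    Tendsto
      (fun ε : ℝ =>
        -(Real.sin y / Real.pi) *
          ((∫ z in (0:ℝ)..(y - ε), 1 / (Real.cos y - Real.cos z)) +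
           ∫ z in (y + ε)..Real.pi, 1 / (Real.cos y - Real.cos z)))
      (nhdsWithin 0 (Set.Ioi 0)) (nhds 0) :=
  ⟨fun n _ => tendsto_kstarTrunc_cos hy n, tendsto_kstarTrunc_one hy⟩
end
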